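/- Let V be a real inner product space of finite dimension n ≥ 5, let R be an algebraic curvature tensor on V, let {e₁,…,e_n} be an orthonormal basis of V, and let S₀ = (1/(n(n−1)))·Σ_{i,j=1}^{n} R(e_i,e_j,e_i,e_j) be the normalized scalar curvature of R. Set η_n = n(n−1)/(n²−n+12). If for every orthonormal four-frame {f₁,f₂,f₃,f₄} in V one has R(f₁,f₃,f₁,f₃) + R(f₁,f₄,f₁,f₄) + R(f₂,f₃,f₂,f₃) + R(f₂,f₄,f₂,f₄) > 4η_n·S₀, then for every orthonormal four-frame {f₁,f₂,f₃,f₄} in V one has R(f₁,f₂,f₁,f₂) + R(f₃,f₄,f₃,f₄) < 8η_n·S₀. -/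

import Mathlib

open scoped RealInnerProductSpace

variable {V : Type*} [NormedAddCommGroup V] [InnerProductSpace ℝ V]

/-- An algebraic curvature tensor on a real inner product space `V`:
an `ℝ`-multilinear map `V × V × V × V → ℝ` with the standard symmetries and
the first Bianchi identity. -/
def IsCurvatureTensor (R : V →ₗ[ℝ] V →ₗ[ℝ] V →ₗ[ℝ] V →ₗ[ℝ] ℝ) : Prop :=
  (∀ X Y Z W : V, R X Y Z W = - R Y X Z W) ∧
  (∀ X Y Z W : V, R X Y Z W = - R X Y W Z) ∧
  (∀ X Y Z W : V, R X Y Z W = R Z W X Y) ∧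
  (∀ X Y Z W : V, R X Y Z W + R X Z W Y + R X W Y Z = 0)

/-- An orthonormal four-frame: four pairwise orthogonal unit vectors. -/
def OrthonormalFrame4 (e₁ e₂ e₃ e₄ : V) : Prop :=
  ‖e₁‖ = 1 ∧ ‖e₂‖ = 1 ∧ ‖e₃‖ = 1 ∧ ‖e₄‖ = 1 ∧
  ⟪e₁, e₂⟫ = 0 ∧ ⟪e₁, e₃⟫ = 0 ∧ ⟪e₁, e₄⟫ = 0 ∧
  ⟪e₂, e₃⟫ = 0 ∧ ⟪e₂, e₄⟫ = 0 ∧ ⟪e₃, e₄⟫ = 0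

open Finset

/-!
Extend the frame to an orthonormal basis `e` and put `K i j = R(e i, e j, e i, e j)`, a symmetric
matrix with zero diagonal. Its total sum is the scalar curvature `n(n-1)S₀ = (n² - n + 12)κ`,
`κ = ηS₀`, in any basis. The hypothesis says that every 4-cycle `i k j l` of the complete graph on
the basis has `K`-weight greater than `4κ`; the conclusion says that the pairs other than `{1,2}`
and `{3,4}` have average weight greater than `κ`.

Averaging the hypothesis over the 4-cycles `p k q l` with `k, l ∈ W` shows that the pairs joining
`{p, q}` to a set `W` of at least two further points (a star) have average weight greater than `κ`.
Let `m = n - 4` and give each star the points other than `p`, `q` and their partners in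
`{1,2}, {3,4}`. Taking the stars of `{1,2}` and `{3,4}` `2m - 2` times each, the star of every pair
(point off the frame, point of the frame) once and the star of every pair of points off the frame
three times covers each pair other than `{1,2}` and `{3,4}` exactly `6m - 4` times.
-/

theorem Finset.sum_sum_erase_add {ι : Type*} [DecidableEq ι] (W : Finset ι) (g : ι → ℝ) :
    ∑ k ∈ W, ∑ l ∈ W.erase k, (g k + g l) = 2 * (#W - 1 : ℝ) * ∑ k ∈ W, g k := by
  have h : ∀ k ∈ W, ∑ l ∈ W.erase k, (g k + g l) = (#W - 1 : ℝ) * g k + (∑ l ∈ W, g l - g k) := by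
    intro k hk
    rw [sum_add_distrib, sum_const, card_erase_of_mem hk, nsmul_eq_mul,
      Nat.cast_pred (card_pos.2 ⟨k, hk⟩), sum_erase_eq_sub hk]
  rw [sum_congr rfl h, sum_add_distrib, sum_sub_distrib, sum_const, ← mul_sum, nsmul_eq_mul]
  ring

def FourCycleBound {ι : Type*} (K : ι → ι → ℝ) (κ : ℝ) : Prop :=
  ∀ i j k l, i ≠ j → i ≠ k → i ≠ l → j ≠ k → j ≠ l → k ≠ l →
    4 * κ < K i k + K i l + K j k + K j l

namespace FourCycleBound

variable {ι : Type*} [DecidableEq ι] {K : ι → ι → ℝ} {κ : ℝ}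

theorem lt_sum_star (h : FourCycleBound K κ) {p q : ι} (hpq : p ≠ q) {W : Finset ι}
    (hp : p ∉ W) (hq : q ∉ W) (hW : 2 ≤ #W) :
    2 * #W * κ < ∑ w ∈ W, (K p w + K q w) := by
  have hcycles : ∑ k ∈ W, ∑ l ∈ W.erase k, (2 * κ + 2 * κ) <
      ∑ k ∈ W, ∑ l ∈ W.erase k, ((K p k + K q k) + (K p l + K q l)) := by
    refine sum_lt_sum_of_nonempty (card_pos.1 (by omega)) fun k hk =>
      sum_lt_sum_of_nonempty (card_pos.1 (by rw [card_erase_of_mem hk]; omega)) fun l hl => ?_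
    have hlW := mem_of_mem_erase hl
    have := h p q k l hpq (ne_of_mem_of_not_mem hk hp).symm (ne_of_mem_of_not_mem hlW hp).symm
      (ne_of_mem_of_not_mem hk hq).symm (ne_of_mem_of_not_mem hlW hq).symm (ne_of_mem_erase hl).symm
    linarith
  rw [sum_sum_erase_add, sum_sum_erase_add, sum_const, nsmul_eq_mul] at hcycles
  have hpos : (0 : ℝ) < 2 * (#W - 1) := by
    have : (2 : ℝ) ≤ #W := by exact_mod_cast hW
    linarith
  refine lt_of_mul_lt_mul_left ?_ hpos.le
  linarith

variable [Fintype ι]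

theorem lt_sum_star_compl (h : FourCycleBound K κ) {p q : ι} (hpq : p ≠ q) {S : Finset ι}
    (hp : p ∈ S) (hq : q ∈ S) (hS : #S + 2 ≤ Fintype.card ι) :
    2 * (Fintype.card ι - #S : ℝ) * κ <
      ∑ j, K p j + ∑ j, K q j - ∑ s ∈ S, (K p s + K q s) := by
  have hstar := h.lt_sum_star hpq (W := Sᶜ) (by simpa) (by simpa) (by rw [card_compl]; omega)
  rw [card_compl, Nat.cast_sub (card_le_univ S)] at hstar
  rw [← sum_add_distrib, ← sum_add_sum_compl S]
  linarith

theorem le_sum_star_pairs (h : FourCycleBound K κ) (hsymm : ∀ i j, K i j = K j i)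
    (hdiag : ∀ i, K i i = 0) (hn : 4 ≤ Fintype.card ι) (A : Finset ι) :
    #A * (#A - 1 : ℝ) * (Fintype.card ι - 2) * κ ≤
      (#A - 1 : ℝ) * ∑ k ∈ A, ∑ j, K k j - ∑ k ∈ A, ∑ l ∈ A, K k l := by
  have hstars : ∑ k ∈ A, ∑ l ∈ A.erase k,
      ((Fintype.card ι - 2 : ℝ) * κ + (Fintype.card ι - 2 : ℝ) * κ) ≤
        ∑ k ∈ A, ∑ l ∈ A.erase k, ((∑ j, K k j + ∑ j, K l j) - 2 * K k l) := by
    refine sum_le_sum fun k _ => sum_le_sum fun l hl => ?_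
    have hlk := ne_of_mem_erase hl
    have := h.lt_sum_star_compl hlk.symm (S := {k, l}) (by simp) (by simp)
      (by rw [card_pair hlk.symm]; omega)
    rw [sum_pair hlk.symm, card_pair hlk.symm, hdiag, hdiag, hsymm l k] at this
    push_cast at this
    linarith
  have herase : ∀ k, ∑ l ∈ A.erase k, K k l = ∑ l ∈ A, K k l := fun k => sum_erase A (hdiag k)
  rw [sum_sum_erase_add, sum_const, nsmul_eq_mul] at hstars
  simp only [sum_sub_distrib, ← mul_sum, herase, sum_sum_erase_add (g := fun k => ∑ j, K k j)]
    at hstars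
  linarith

theorem lt_sum_star_frame (h : FourCycleBound K κ) (hsymm : ∀ i j, K i j = K j i)
    (hdiag : ∀ i, K i i = 0) (hn : 5 ≤ Fintype.card ι) {a b c d k : ι} (hab : a ≠ b)
    (hcd : c ≠ d) (hk : k ∉ ({a, b, c, d} : Finset ι)) :
    8 * (Fintype.card ι - 3 : ℝ) * κ <
      4 * ∑ j, K k j + (∑ j, K a j + ∑ j, K b j + ∑ j, K c j + ∑ j, K d j)
        - 3 * (K k a + K k b + K k c + K k d) - 2 * (K a b + K c d) := by
  simp only [mem_insert, mem_singleton, not_or] at hk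
  obtain ⟨hka, hkb, hkc, hkd⟩ := hk
  have hstar : ∀ p p', k ≠ p → k ≠ p' → p ≠ p' → 2 * (Fintype.card ι - 3 : ℝ) * κ <
      ∑ j, K k j + ∑ j, K p j - (2 * K k p + K k p' + K p p') := by
    intro p p' hkp hkp' hpp'
    have hcard : #({k, p, p'} : Finset ι) = 3 := by
      rw [card_insert_of_notMem (by simp [hkp, hkp']), card_pair hpp']
    have := h.lt_sum_star_compl hkp (S := {k, p, p'}) (by simp) (by simp) (by omega)
    rw [sum_insert (by simp [hkp, hkp']), sum_pair hpp', hcard, hdiag, hdiag, hsymm p k] at this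
    push_cast at this
    linarith
  linarith [hstar a b hka hkb hab, hstar b a hkb hka hab.symm, hstar c d hkc hkd hcd,
    hstar d c hkd hkc hcd.symm, hsymm b a, hsymm d c]

theorem two_mul_add_lt_sum (h : FourCycleBound K κ) (hsymm : ∀ i j, K i j = K j i)
    (hdiag : ∀ i, K i i = 0) (hn : 5 ≤ Fintype.card ι) {a b c d : ι} (hab : a ≠ b) (hac : a ≠ c)
    (had : a ≠ d) (hbc : b ≠ c) (hbd : b ≠ d) (hcd : c ≠ d) :
    2 * (K a b + K c d) + ((Fintype.card ι : ℝ) ^ 2 - Fintype.card ι - 4) * κ <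
      ∑ i, ∑ j, K i j := by
  set S : Finset ι := {a, b, c, d}
  have hS : #S = 4 := by
    rw [card_insert_of_notMem (by simp [hab, hac, had]),
      card_insert_of_notMem (by simp [hbc, hbd]), card_pair hcd]
  have hm : (#Sᶜ : ℝ) = Fintype.card ι - 4 := by
    rw [card_compl, hS, Nat.cast_sub (by omega)]
    rfl
  have hsum_univ : ∀ f : ι → ℝ, ∑ i, f i = f a + f b + f c + f d + ∑ k ∈ Sᶜ, f k := by
    intro f
    rw [← sum_add_sum_compl S, sum_insert (by simp [hab, hac, had]),
      sum_insert (by simp [hbc, hbd]), sum_pair hcd]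
    ring
  have hrows : ∑ k ∈ Sᶜ, ∑ j, K k j = ∑ k ∈ Sᶜ, K k a + ∑ k ∈ Sᶜ, K k b + ∑ k ∈ Sᶜ, K k c +
      ∑ k ∈ Sᶜ, K k d + ∑ k ∈ Sᶜ, ∑ l ∈ Sᶜ, K k l := by
    simp only [← sum_add_distrib]
    exact sum_congr rfl fun k _ => hsum_univ (K k)
  have hab' := h.lt_sum_star_compl hab (S := {a, b}) (by simp) (by simp)
    (by rw [card_pair hab]; omega)
  have hcd' := h.lt_sum_star_compl hcd (S := {c, d}) (by simp) (by simp)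
    (by rw [card_pair hcd]; omega)
  rw [sum_pair hab, card_pair hab, hdiag, hdiag, hsymm b a] at hab'
  rw [sum_pair hcd, card_pair hcd, hdiag, hdiag, hsymm d c] at hcd'
  have hframe : ∑ k ∈ Sᶜ, 8 * (Fintype.card ι - 3 : ℝ) * κ < ∑ k ∈ Sᶜ, (4 * ∑ j, K k j +
      (∑ j, K a j + ∑ j, K b j + ∑ j, K c j + ∑ j, K d j)
        - 3 * (K k a + K k b + K k c + K k d) - 2 * (K a b + K c d)) :=
    sum_lt_sum_of_nonempty (card_pos.1 (by rw [card_compl]; omega)) fun k hk =>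
      h.lt_sum_star_frame hsymm hdiag hn hab hcd (mem_compl.1 hk)
  simp only [sum_sub_distrib, sum_add_distrib, ← mul_sum, sum_const, nsmul_eq_mul, hm] at hframe
  have hpairs := h.le_sum_star_pairs hsymm hdiag (by omega) Sᶜ
  rw [hm, hrows] at hpairs
  rw [hrows] at hframe
  rw [hsum_univ fun i => ∑ j, K i j, hrows]
  have hn5 : (5 : ℝ) ≤ Fintype.card ι := by exact_mod_cast hn
  have key : 0 < (3 * (Fintype.card ι - 4 : ℝ) - 2) * (∑ j, K a j + ∑ j, K b j + ∑ j, K c j +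
      ∑ j, K d j + (∑ k ∈ Sᶜ, K k a + ∑ k ∈ Sᶜ, K k b + ∑ k ∈ Sᶜ, K k c + ∑ k ∈ Sᶜ, K k d +
        ∑ k ∈ Sᶜ, ∑ l ∈ Sᶜ, K k l) - 2 * (K a b + K c d) -
      ((Fintype.card ι : ℝ) ^ 2 - Fintype.card ι - 4) * κ) := by
    -- the star counts `2m - 2`, `1`, `3` with `m = card ι - 4`
    linear_combination (2 * (Fintype.card ι - 5 : ℝ)) * (hab' + hcd') + hframe + 3 * hpairs
  linarith [pos_of_mul_pos_right key (by linarith)]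

end FourCycleBound

theorem OrthonormalBasis.sum_apply_self_eq {ι ι' : Type*} [Fintype ι] [Fintype ι']
    (e : OrthonormalBasis ι ℝ V) (f : OrthonormalBasis ι' ℝ V) (B : V →ₗ[ℝ] V →ₗ[ℝ] ℝ) :
    ∑ i, B (e i) (e i) = ∑ j, B (f j) (f j) := by
  have : FiniteDimensional ℝ V := e.toBasis.finiteDimensional_of_finite
  simpa using congrArg (TensorProduct.lift B)
    ((InnerProductSpace.canonicalCovariantTensor_eq_sum V e).symm.trans
      (InnerProductSpace.canonicalCovariantTensor_eq_sum V f))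

namespace IsCurvatureTensor

variable {R : V →ₗ[ℝ] V →ₗ[ℝ] V →ₗ[ℝ] V →ₗ[ℝ] ℝ}

theorem apply_self_eq_zero (hR : IsCurvatureTensor R) (X Z W : V) : R X X Z W = 0 := by
  linarith [hR.1 X X Z W]

theorem sectional_symm (hR : IsCurvatureTensor R) (X Y : V) : R X Y X Y = R Y X Y X := by
  rw [hR.1, hR.2.1, neg_neg]

theorem sum_sectional_eq (hR : IsCurvatureTensor R) {ι ι' : Type*} [Fintype ι] [Fintype ι']
    (e : OrthonormalBasis ι ℝ V) (f : OrthonormalBasis ι' ℝ V) :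
    ∑ i, ∑ j, R (e i) (e j) (e i) (e j) = ∑ i, ∑ j, R (f i) (f j) (f i) (f j) := by
  have htrace (x : V) : ∑ j, R x (e j) x (e j) = ∑ k, R x (f k) x (f k) :=
    e.sum_apply_self_eq f ((R x).flip x)
  calc ∑ i, ∑ j, R (e i) (e j) (e i) (e j) = ∑ i, ∑ k, R (e i) (f k) (e i) (f k) :=
        sum_congr rfl fun i _ => htrace (e i)
    _ = ∑ k, ∑ i, R (f k) (e i) (f k) (e i) := by
        rw [sum_comm]
        exact sum_congr rfl fun k _ => sum_congr rfl fun i _ => hR.sectional_symm _ _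
    _ = ∑ k, ∑ l, R (f k) (f l) (f k) (f l) := sum_congr rfl fun k _ => htrace (f k)

end IsCurvatureTensor

theorem OrthonormalFrame4.orthonormal {f₁ f₂ f₃ f₄ : V} (hf : OrthonormalFrame4 f₁ f₂ f₃ f₄) :
    Orthonormal ℝ ![f₁, f₂, f₃, f₄] := by
  obtain ⟨h₁, h₂, h₃, h₄, h₁₂, h₁₃, h₁₄, h₂₃, h₂₄, h₃₄⟩ := hf
  rw [orthonormal_iff_ite]
  intro i j
  fin_cases i <;> fin_cases j <;>
    simp [real_inner_comm f₁, real_inner_comm f₂ f₃, real_inner_comm f₂ f₄, real_inner_comm f₃ f₄,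
      *]

theorem Orthonormal.orthonormalFrame4 {ι : Type*} {v : ι → V} (hv : Orthonormal ℝ v) {i j k l : ι}
    (hij : i ≠ j) (hik : i ≠ k) (hil : i ≠ l) (hjk : j ≠ k) (hjl : j ≠ l) (hkl : k ≠ l) :
    OrthonormalFrame4 (v i) (v j) (v k) (v l) :=
  ⟨hv.1 i, hv.1 j, hv.1 k, hv.1 l, hv.2 hij, hv.2 hik, hv.2 hil, hv.2 hjk, hv.2 hjl, hv.2 hkl⟩

theorem IsCurvatureTensor.two_mul_add_lt_sum_sectional {R : V →ₗ[ℝ] V →ₗ[ℝ] V →ₗ[ℝ] V →ₗ[ℝ] ℝ}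
    (hR : IsCurvatureTensor R) {ι : Type*} [Fintype ι] (b : OrthonormalBasis ι ℝ V)
    (hn : 5 ≤ Fintype.card ι) {κ : ℝ}
    (hκ : ∀ f₁ f₂ f₃ f₄ : V, OrthonormalFrame4 f₁ f₂ f₃ f₄ →
      4 * κ < R f₁ f₃ f₁ f₃ + R f₁ f₄ f₁ f₄ + R f₂ f₃ f₂ f₃ + R f₂ f₄ f₂ f₄)
    {f₁ f₂ f₃ f₄ : V} (hf : OrthonormalFrame4 f₁ f₂ f₃ f₄) :
    2 * (R f₁ f₂ f₁ f₂ + R f₃ f₄ f₃ f₄) + ((Fintype.card ι : ℝ) ^ 2 - Fintype.card ι - 4) * κ <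
      ∑ i, ∑ j, R (b i) (b j) (b i) (b j) := by
  classical
  have : FiniteDimensional ℝ V := b.toBasis.finiteDimensional_of_finite
  obtain ⟨u, e, hvu, he⟩ := hf.orthonormal.toSubtypeRange.exists_orthonormalBasis_extension
  let w (i : Fin 4) : u := ⟨_, hvu (Set.mem_range_self i)⟩
  have hw : Function.Injective w := fun i j hij =>
    hf.orthonormal.linearIndependent.injective (congrArg Subtype.val hij)
  have hcard : Fintype.card u = Fintype.card ι := by
    rw [← Module.finrank_eq_card_basis e.toBasis, Module.finrank_eq_card_basis b.toBasis]
  have hK : FourCycleBound (fun i j : u => R (e i) (e j) (e i) (e j)) κ :=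
    fun i j k l hij hik hil hjk hjl hkl =>
      hκ _ _ _ _ (e.orthonormal.orthonormalFrame4 hij hik hil hjk hjl hkl)
  have h := hK.two_mul_add_lt_sum (fun _ _ => hR.sectional_symm _ _)
    (fun _ => hR.apply_self_eq_zero _ _ _) (hcard ▸ hn) (hw.ne (by decide : (0 : Fin 4) ≠ 1))
    (hw.ne (by decide : (0 : Fin 4) ≠ 2)) (hw.ne (by decide : (0 : Fin 4) ≠ 3))
    (hw.ne (by decide : (1 : Fin 4) ≠ 2)) (hw.ne (by decide : (1 : Fin 4) ≠ 3))
    (hw.ne (by decide : (2 : Fin 4) ≠ 3))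
  rw [hcard, hR.sum_sectional_eq e b] at h
  simpa only [w, he, Matrix.cons_val] using h

theorem stmt_19 {V : Type*} [NormedAddCommGroup V] [InnerProductSpace ℝ V]
    (n : ℕ) (hn : 5 ≤ n) (b : OrthonormalBasis (Fin n) ℝ V)
    (R : V →ₗ[ℝ] V →ₗ[ℝ] V →ₗ[ℝ] V →ₗ[ℝ] ℝ) (hR : IsCurvatureTensor R)
    (S₀ : ℝ) (hS₀ : S₀ = (1 / ((n : ℝ) * ((n : ℝ) - 1))) *
      ∑ i : Fin n, ∑ j : Fin n, R (b i) (b j) (b i) (b j))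
    (η : ℝ) (hη : η = (n : ℝ) * ((n : ℝ) - 1) / ((n : ℝ) ^ 2 - (n : ℝ) + 12))
    (hyp : ∀ f₁ f₂ f₃ f₄ : V, OrthonormalFrame4 f₁ f₂ f₃ f₄ →
      R f₁ f₃ f₁ f₃ + R f₁ f₄ f₁ f₄ + R f₂ f₃ f₂ f₃ + R f₂ f₄ f₂ f₄ >
        4 * η * S₀) :
    ∀ f₁ f₂ f₃ f₄ : V, OrthonormalFrame4 f₁ f₂ f₃ f₄ →
      R f₁ f₂ f₁ f₂ + R f₃ f₄ f₃ f₄ < 8 * η * S₀ := by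
  intro f₁ f₂ f₃ f₄ hf
  have h := hR.two_mul_add_lt_sum_sectional b (by simpa using hn) (κ := η * S₀)
    (fun f₁ f₂ f₃ f₄ hf => by linarith [hyp f₁ f₂ f₃ f₄ hf]) hf
  have hn' : (5 : ℝ) ≤ n := by exact_mod_cast hn
  have hscalar : ∑ i, ∑ j, R (b i) (b j) (b i) (b j) = ((n : ℝ) ^ 2 - n + 12) * (η * S₀) := by
    have : (n : ℝ) - 1 ≠ 0 := by linarith
    have : (n : ℝ) * (n - 1) + 12 ≠ 0 := by nlinarith
    rw [hS₀, hη]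
    field_simp
  rw [Fintype.card_fin, hscalar] at h
  linarith
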